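/- In the setting of a cone K with dilation group g_λ and compatible unitary group U_λ on H̃, and a parameter space Y with an ℝ₊-action, the C*-subalgebra L_∞ of homogeneous elements (families B ∈ C_b(Y, B(H̃)) commuting with C_0(K) modulo the ideal J = C_0(Y, K(H̃)) and satisfying U_λ^{-1} B(λy) U_λ = B(y) for all λ) intersects the ideal J_0 of almost compact families (B with Bφ ∈ J for all φ ∈ C_0(K)) only in {0}. -/

import Mathlib

open Filter Topology ZeroAtInfty

section Cone

variable {K : Type*} [TopologicalSpace K] [LocallyCompactSpace K] [T2Space K]
variable {H : Type*} [NormedAddCommGroup H] [InnerProductSpace ℂ H] [CompleteSpace H]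

/-- The axioms of a cone: a distinguished vertex together with a multiplicative
dilation group `g_λ` (`λ > 0`) fixing the vertex, such that every compact set is moved
into any given neighborhood of the vertex by all sufficiently small dilations. -/
structure ConeStruct (K : Type*) [TopologicalSpace K] where
  vertex : K
  g : ℝ → K → K
  g_cont : ∀ l : ℝ, 0 < l → Continuous (g l)
  g_one : g 1 = id
  g_mul : ∀ l m : ℝ, 0 < l → 0 < m → ∀ z, g (l * m) z = g l (g m z)
  g_vertex : ∀ l : ℝ, 0 < l → g l vertex = vertex
  g_shrink : ∀ Q : Set K, IsCompact Q → ∀ V ∈ 𝓝 vertex,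
    ∃ ε > (0:ℝ), ∀ l : ℝ, 0 < l → l < ε → g l '' Q ⊆ V

/-- The localizing class `F₀` at the vertex of the cone: compactly supported continuous
functions with values in `[0,1]` equal to `1` in a neighborhood of the vertex. -/
def coneLocClass (c : ConeStruct K) : Set C₀(K, ℂ) :=
  {φ | HasCompactSupport ⇑φ ∧ (∀ z, (φ z).re ∈ Set.Icc (0:ℝ) 1 ∧ (φ z).im = 0) ∧
    ∃ V ∈ 𝓝 c.vertex, ∀ z ∈ V, φ z = 1}

variable (π : C₀(K, ℂ) →⋆ₙₐ[ℂ] (H →L[ℂ] H))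

/-- A strongly continuous one-parameter unitary group `U_λ` (`λ > 0`). -/
def IsUnitaryDilGroup (U : ℝ → H →L[ℂ] H) : Prop :=
  U 1 = 1 ∧ (∀ l m : ℝ, 0 < l → 0 < m → U (l * m) = U l ∘L U m) ∧
    (∀ l : ℝ, 0 < l → ∀ v, ‖U l v‖ = ‖v‖) ∧
    ∀ v : H, ContinuousOn (fun l => U l v) (Set.Ioi (0:ℝ))

/-- Compatibility of the unitary group with the module structure:
`U_λ φ U_λ⁻¹ = φ ∘ g_λ`, stated as `π(φ ∘ g_λ) U_λ = U_λ π(φ)`. -/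
def DilCompatible (c : ConeStruct K) (U : ℝ → H →L[ℂ] H) : Prop :=
  ∀ l : ℝ, 0 < l → ∀ φ ψ : C₀(K, ℂ), (∀ z, ψ z = φ (c.g l z)) →
    (π ψ) ∘L (U l) = (U l) ∘L (π φ)

/-- The localization condition at the vertex: the localizing class `F₀`, directed by
`φ ≺ ψ ↔ φψ = ψ`, converges strongly to `0`. -/
def VertexLocConv (c : ConeStruct K) : Prop :=
  ∀ (v : H) (ε : ℝ), 0 < ε →
    ∃ φ ∈ coneLocClass c, ∀ ψ ∈ coneLocClass c, φ * ψ = ψ → ‖π ψ v‖ < ε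

/-- Nondegeneracy: the strong closure of the image of `C₀(K)` contains the identity. -/
def NondegenerateModule : Prop :=
  ∀ (v : H) (ε : ℝ), 0 < ε → ∃ φ : C₀(K, ℂ), ‖π φ v - v‖ < ε

end Cone

section Families

variable {K : Type*} [TopologicalSpace K] [LocallyCompactSpace K] [T2Space K]
variable {H : Type*} [NormedAddCommGroup H] [InnerProductSpace ℂ H] [CompleteSpace H]
variable {Y : Type*} [TopologicalSpace Y]

/-- Membership in the ideal `J = C₀(Y, K(H))`: compact-valued families tending to zero
in norm at infinity. -/
def MemJIdeal (D : Y → H →L[ℂ] H) : Prop :=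
  (∀ y, IsCompactOperator ⇑(D y)) ∧ Tendsto (fun y => ‖D y‖) (cocompact Y) (𝓝 0)

variable (π : C₀(K, ℂ) →⋆ₙₐ[ℂ] (H →L[ℂ] H))

/-- Membership in the algebra `L` of bounded continuous families commuting with the
`C₀(K)`-action modulo the ideal `J`. -/
def MemLAlg (B : Y → H →L[ℂ] H) : Prop :=
  Continuous B ∧ (∃ M, ∀ y, ‖B y‖ ≤ M) ∧
    ∀ φ : C₀(K, ℂ), MemJIdeal (fun y => B y ∘L π φ - π φ ∘L B y)

/-- Membership in the ideal `J₀ ⊂ L` of almost compact families: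
`Bφ ∈ J` for every `φ ∈ C₀(K)`. -/
def MemAlmostCompact (B : Y → H →L[ℂ] H) : Prop :=
  ∀ φ : C₀(K, ℂ), MemJIdeal (fun y => B y ∘L π φ)

/-- Homogeneity of a family: `U_λ⁻¹ B(λy) U_λ = B(y)`. -/
def IsHomogeneousFamily (U : ℝ → H →L[ℂ] H) (act : ℝ → Y → Y)
    (B : Y → H →L[ℂ] H) : Prop :=
  ∀ l : ℝ, 0 < l → ∀ y, (U l⁻¹) ∘L B (act l y) ∘L (U l) = B y

end Families

/-! Fix `y` and a localizer `χ ∈ F₀`. For `v ∈ H` put `x_λ = U_λ π(χ) v`. Homogeneity gives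
`‖B(y) π(χ) v‖ = ‖B(λy) π(χ) x_λ‖`, and `x_λ = π(χ) x_λ` for large `λ`. By compatibility
`x_λ = π(χ ∘ g_λ) U_λ v`; as `χ ∘ g_λ` concentrates at the vertex, the localization condition
makes `x_λ` weakly null, while `‖x_λ‖` stays constant. Since `B π(χ) ∈ J`, along the orbit
`λ ↦ λy` it either tends to `0` at infinity or accumulates at a compact operator; either way it
sends `x_λ` to `0` in norm. Hence `B(y) π(χ) = 0` for every localizer. The localizers form an
approximate unit of `C₀(K)`, so by nondegeneracy the ranges of the `π(χ)` are dense in `H`,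
and `B(y) = 0`. -/

open Metric

namespace ConeStruct

variable {K : Type*} [TopologicalSpace K] (c : ConeStruct K)

lemma g_inv_g_apply {l : ℝ} (hl : 0 < l) (z : K) : c.g l⁻¹ (c.g l z) = z := by
  rw [← c.g_mul l⁻¹ l (inv_pos.mpr hl) hl, inv_mul_cancel₀ hl.ne', c.g_one, id]

lemma g_g_inv_apply {l : ℝ} (hl : 0 < l) (z : K) : c.g l (c.g l⁻¹ z) = z := by
  simpa using c.g_inv_g_apply (inv_pos.mpr hl) z

noncomputable def dilation {l : ℝ} (hl : 0 < l) : K ≃ₜ K where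
  toFun := c.g l
  invFun := c.g l⁻¹
  left_inv := c.g_inv_g_apply hl
  right_inv := c.g_g_inv_apply hl
  continuous_toFun := c.g_cont l hl
  continuous_invFun := c.g_cont l⁻¹ (inv_pos.mpr hl)

/-- The pull-back `φ ∘ g_λ`, with the junk value `0` for `λ ≤ 0`. -/
noncomputable def dilate (l : ℝ) (φ : C₀(K, ℂ)) : C₀(K, ℂ) :=
  if hl : 0 < l then φ.comp (c.dilation hl).toCocompactMap else 0

lemma dilate_apply {l : ℝ} (hl : 0 < l) (φ : C₀(K, ℂ)) (z : K) :
    c.dilate l φ z = φ (c.g l z) := by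
  rw [dilate, dif_pos hl]
  rfl

end ConeStruct

section Localizers

variable {K : Type*} [TopologicalSpace K] {c : ConeStruct K}

lemma isSelfAdjoint_of_mem_coneLocClass {χ : C₀(K, ℂ)} (hχ : χ ∈ coneLocClass c) :
    IsSelfAdjoint χ := by
  ext z
  exact Complex.conj_eq_iff_im.mpr (hχ.2.1 z).2

lemma norm_one_sub_le_one_of_mem_coneLocClass {χ : C₀(K, ℂ)} (hχ : χ ∈ coneLocClass c)
    (z : K) : ‖1 - χ z‖ ≤ 1 := by
  obtain ⟨⟨h0, h1⟩, him⟩ := hχ.2.1 z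
  have hre : χ z = ((χ z).re : ℂ) := Complex.ext rfl (by simp [him])
  rw [hre, ← Complex.ofReal_one, ← Complex.ofReal_sub, Complex.norm_real, Real.norm_eq_abs,
    abs_le]
  constructor <;> linarith

lemma ConeStruct.dilate_mem_coneLocClass {l : ℝ} (hl : 0 < l) {χ : C₀(K, ℂ)}
    (hχ : χ ∈ coneLocClass c) : c.dilate l χ ∈ coneLocClass c := by
  obtain ⟨hsupp, hval, V, hV, hone⟩ := hχ
  have hfun : ⇑(c.dilate l χ) = χ ∘ c.dilation hl := funext (c.dilate_apply hl χ)
  refine ⟨hfun ▸ hsupp.comp_homeomorph _, fun z => hfun ▸ hval _, c.g l ⁻¹' V, ?_,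
    fun z hz => hfun ▸ hone _ hz⟩
  exact (c.g_cont l hl).continuousAt.preimage_mem_nhds (by rwa [c.g_vertex l hl])

lemma ConeStruct.eventually_mul_dilate_eq {φ χ : C₀(K, ℂ)} (hφ : φ ∈ coneLocClass c)
    (hχ : HasCompactSupport ⇑χ) : ∀ᶠ l in atTop, φ * c.dilate l χ = c.dilate l χ := by
  obtain ⟨-, -, V, hV, hone⟩ := hφ
  obtain ⟨ε, hε, hshrink⟩ := c.g_shrink (tsupport ⇑χ) hχ V hV
  filter_upwards [eventually_gt_atTop 0, tendsto_inv_atTop_zero.eventually (gt_mem_nhds hε)]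
    with l hl hlε
  ext z
  rw [ZeroAtInftyContinuousMap.mul_apply, c.dilate_apply hl]
  by_cases h0 : χ (c.g l z) = 0
  · rw [h0, mul_zero]
  · have hz : z ∈ V := hshrink l⁻¹ (inv_pos.mpr hl) hlε
      ⟨c.g l z, subset_tsupport _ h0, c.g_inv_g_apply hl z⟩
    rw [hone z hz, one_mul]

lemma ConeStruct.exists_mem_coneLocClass_eqOn_one {χ₀ : C₀(K, ℂ)} (hχ₀ : χ₀ ∈ coneLocClass c)
    {Q : Set K} (hQ : IsCompact Q) : ∃ χ ∈ coneLocClass c, ∀ z ∈ Q, χ z = 1 := by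
  obtain ⟨V, hV, hone⟩ := hχ₀.2.2
  obtain ⟨ε, hε, hshrink⟩ := c.g_shrink Q hQ V hV
  refine ⟨c.dilate (ε / 2) χ₀, c.dilate_mem_coneLocClass (half_pos hε) hχ₀, fun z hz => ?_⟩
  rw [c.dilate_apply (half_pos hε)]
  exact hone _ (hshrink _ (half_pos hε) (half_lt_self hε) ⟨z, hz, rfl⟩)

lemma ConeStruct.exists_mem_coneLocClass_norm_sub_mul_le {χ₀ : C₀(K, ℂ)}
    (hχ₀ : χ₀ ∈ coneLocClass c) (φ : C₀(K, ℂ)) {δ : ℝ} (hδ : 0 < δ) :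
    ∃ χ ∈ coneLocClass c, ‖φ - χ * φ‖ ≤ δ := by
  obtain ⟨Q, hQ, hsmall⟩ := mem_cocompact.mp
    (φ.zero_at_infty' (closedBall_mem_nhds (0 : ℂ) hδ))
  obtain ⟨χ, hχ, hone⟩ := c.exists_mem_coneLocClass_eqOn_one hχ₀ hQ
  refine ⟨χ, hχ, ?_⟩
  rw [← ZeroAtInftyContinuousMap.norm_toBCF_eq_norm]
  refine (BoundedContinuousFunction.norm_le hδ.le).mpr fun z => ?_
  change ‖φ z - χ z * φ z‖ ≤ δ
  by_cases hz : z ∈ Q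
  · simp [hone z hz, hδ.le]
  · have hφz : ‖φ z‖ ≤ δ := by simpa using hsmall hz
    calc ‖φ z - χ z * φ z‖ = ‖1 - χ z‖ * ‖φ z‖ := by rw [← norm_mul, sub_mul, one_mul]
      _ ≤ 1 * δ := mul_le_mul (norm_one_sub_le_one_of_mem_coneLocClass hχ z) hφz
          (norm_nonneg _) zero_le_one
      _ = δ := one_mul δ

end Localizers

section CompactOperators

variable {𝕜 E F : Type*} [RCLike 𝕜] [NormedAddCommGroup E] [InnerProductSpace 𝕜 E]
  [CompleteSpace E] [NormedAddCommGroup F] [InnerProductSpace 𝕜 F] [CompleteSpace F]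
  {ι : Type*} {l : Filter ι} {x : ι → E} {C : ℝ}

/-- Every cluster point `a` of `T x_i` in the compact set `T(closedBall 0 C)` is weakly `0`,
since `⟪a, T x_i⟫ = ⟪T† a, x_i⟫ → 0`. -/
lemma IsCompactOperator.tendsto_apply_zero {T : E →L[𝕜] F} (hT : IsCompactOperator T)
    (hb : ∀ᶠ i in l, ‖x i‖ ≤ C) (hw : ∀ w, Tendsto (fun i => inner 𝕜 w (x i)) l (𝓝 0)) :
    Tendsto (fun i => T (x i)) l (𝓝 0) := by
  obtain ⟨S, hS, hTS⟩ := IsCompactOperator.image_closedBall_subset_compact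
    (f := (T : E →ₗ[𝕜] F)) hT C
  refine hS.tendsto_nhds_of_unique_mapClusterPt
    (hb.mono fun i hi => hTS ⟨x i, by simpa using hi, rfl⟩) fun a _ ha => ?_
  have hcl : MapClusterPt (inner 𝕜 a a) l (fun i => inner 𝕜 a (T (x i))) :=
    ha.continuousAt_comp (continuous_const.inner continuous_id).continuousAt
  have hlim : Tendsto (fun i => inner 𝕜 a (T (x i))) l (𝓝 0) := by
    simpa only [ContinuousLinearMap.adjoint_inner_left] using hw (T.adjoint a)
  have haa : inner 𝕜 a a = (0 : 𝕜) :=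
    eq_of_nhds_neBot (hcl.neBot.mono (inf_le_inf_left _ hlim))
  exact inner_self_eq_zero.mp haa

lemma tendsto_apply_zero_of_tendsto_isCompactOperator {T : ι → E →L[𝕜] F} {T₀ : E →L[𝕜] F}
    (hT₀ : IsCompactOperator T₀) (hT : Tendsto T l (𝓝 T₀)) (hb : ∀ᶠ i in l, ‖x i‖ ≤ C)
    (hw : ∀ w, Tendsto (fun i => inner 𝕜 w (x i)) l (𝓝 0)) :
    Tendsto (fun i => T i (x i)) l (𝓝 0) := by
  have hnorm : Tendsto (fun i => ‖T i - T₀‖ * C) l (𝓝 0) := by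
    simpa using (tendsto_iff_norm_sub_tendsto_zero.mp hT).mul_const C
  have hdiff : Tendsto (fun i => (T i - T₀) (x i)) l (𝓝 0) :=
    squeeze_zero_norm' (hb.mono fun i hi =>
      ((T i - T₀).le_opNorm (x i)).trans (mul_le_mul_of_nonneg_left hi (norm_nonneg _))) hnorm
  simpa using hdiff.add (hT₀.tendsto_apply_zero hb hw)

end CompactOperators

lemma MemJIdeal.exists_tendsto_isCompactOperator {H : Type*} [NormedAddCommGroup H]
    [InnerProductSpace ℂ H] {Y : Type*} [TopologicalSpace Y] {D : Y → H →L[ℂ] H}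
    (hDc : Continuous D) (hD : MemJIdeal D) {ι : Type*} (l : Filter ι) [l.NeBot] (y : ι → Y) :
    ∃ l' ≤ l, l'.NeBot ∧ ∃ T₀ : H →L[ℂ] H, IsCompactOperator T₀ ∧
      Tendsto (fun i => D (y i)) l' (𝓝 T₀) := by
  by_cases hesc : Tendsto y l (cocompact Y)
  · exact ⟨l, le_rfl, ‹_›, 0, isCompactOperator_zero,
      tendsto_zero_iff_norm_tendsto_zero.mpr (hD.2.comp hesc)⟩
  · obtain ⟨Q, hQ, hfreq⟩ : ∃ Q, IsCompact Q ∧ ∃ᶠ i in l, y i ∈ Q := by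
      simpa [hasBasis_cocompact.tendsto_right_iff, not_eventually] using hesc
    obtain ⟨z₀, -, hz₀⟩ := hQ.exists_mapClusterPt_of_frequently hfreq
    refine ⟨l ⊓ comap y (𝓝 z₀), inf_le_left, ?_, D z₀, hD.1 z₀,
      (hDc.tendsto z₀).comp (tendsto_comap.mono_left inf_le_right)⟩
    rw [← map_neBot_iff y, Filter.push_pull, inf_comm]
    exact hz₀

section ConeModule

variable {K : Type*} [TopologicalSpace K] {c : ConeStruct K}
  {H : Type*} [NormedAddCommGroup H] [InnerProductSpace ℂ H] [CompleteSpace H]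
  {π : C₀(K, ℂ) →⋆ₙₐ[ℂ] (H →L[ℂ] H)} {U : ℝ → H →L[ℂ] H} {χ : C₀(K, ℂ)}

lemma DilCompatible.dilate_apply (hcomp : DilCompatible π c U) {l : ℝ} (hl : 0 < l)
    (χ : C₀(K, ℂ)) (u : H) : π (c.dilate l χ) (U l u) = U l (π χ u) :=
  DFunLike.congr_fun (hcomp l hl χ (c.dilate l χ) (c.dilate_apply hl χ)) u

lemma DilCompatible.eventually_apply_eq (hcomp : DilCompatible π c U)
    (hχ : χ ∈ coneLocClass c) (v : H) :
    ∀ᶠ l in atTop, π χ (U l (π χ v)) = U l (π χ v) := by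
  filter_upwards [eventually_gt_atTop 0, c.eventually_mul_dilate_eq hχ hχ.1] with l hl habs
  rw [← hcomp.dilate_apply hl, ← ContinuousLinearMap.comp_apply, ← ContinuousLinearMap.mul_def,
    ← map_mul, habs]

lemma VertexLocConv.tendsto_norm_dilate_apply (hloc : VertexLocConv π c)
    (hχ : χ ∈ coneLocClass c) (w : H) :
    Tendsto (fun l => ‖π (c.dilate l χ) w‖) atTop (𝓝 0) := by
  refine tendsto_order.2 ⟨fun a ha => Eventually.of_forall fun l => ha.trans_le (norm_nonneg _),
    fun ε hε => ?_⟩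
  obtain ⟨φ, hφ, hsmall⟩ := hloc w ε hε
  filter_upwards [eventually_gt_atTop 0, c.eventually_mul_dilate_eq hφ hχ.1] with l hl habs
  exact hsmall _ (c.dilate_mem_coneLocClass hl hχ) habs

lemma DilCompatible.tendsto_inner_apply_atTop (hcomp : DilCompatible π c U)
    (hloc : VertexLocConv π c) (hUiso : ∀ l : ℝ, 0 < l → ∀ v, ‖U l v‖ = ‖v‖)
    (hχ : χ ∈ coneLocClass c) (v w : H) :
    Tendsto (fun l => inner ℂ w (U l (π χ v))) atTop (𝓝 0) := by
  refine squeeze_zero_norm' ?_ (by simpa using (hloc.tendsto_norm_dilate_apply hχ w).mul_const ‖v‖)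
  filter_upwards [eventually_gt_atTop 0] with l hl
  have hsa : IsSelfAdjoint (π (c.dilate l χ)) :=
    (isSelfAdjoint_of_mem_coneLocClass (c.dilate_mem_coneLocClass hl hχ)).map π
  rw [← hcomp.dilate_apply hl, ← ContinuousLinearMap.adjoint_inner_left, hsa.adjoint_eq,
    ← hUiso l hl v]
  exact norm_inner_le_norm _ _

lemma NondegenerateModule.dense_iUnion_range_coneLocClass (hnd : NondegenerateModule π)
    {χ₀ : C₀(K, ℂ)} (hχ₀ : χ₀ ∈ coneLocClass c) :
    Dense (⋃ χ ∈ coneLocClass c, Set.range (π χ)) := by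
  refine Metric.dense_iff.mpr fun v r hr => ?_
  obtain ⟨φ, hφ⟩ := hnd v (r / 2) (half_pos hr)
  have hδ : 0 < r / 2 / (‖v‖ + 1) := by positivity
  obtain ⟨χ, hχ, hχφ⟩ := c.exists_mem_coneLocClass_norm_sub_mul_le hχ₀ φ hδ
  refine ⟨π χ (π φ v), ?_, Set.mem_biUnion hχ (Set.mem_range_self _)⟩
  have hcut : ‖π χ (π φ v) - π φ v‖ ≤ r / 2 / (‖v‖ + 1) * ‖v‖ := calc
    ‖π χ (π φ v) - π φ v‖ = ‖π (φ - χ * φ) v‖ := by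
      rw [← norm_neg, map_sub, map_mul, neg_sub]; rfl
    _ ≤ ‖φ - χ * φ‖ * ‖v‖ := ((π _).le_opNorm v).trans
      (mul_le_mul_of_nonneg_right (NonUnitalStarAlgHom.norm_apply_le π _) (norm_nonneg _))
    _ ≤ r / 2 / (‖v‖ + 1) * ‖v‖ := mul_le_mul_of_nonneg_right hχφ (norm_nonneg _)
  have hfrac : r / 2 / (‖v‖ + 1) * ‖v‖ < r / 2 := by
    rw [div_mul_eq_mul_div, div_lt_iff₀ (by positivity)]
    nlinarith
  rw [mem_ball, dist_eq_norm]
  calc ‖π χ (π φ v) - v‖ ≤ ‖π χ (π φ v) - π φ v‖ + ‖π φ v - v‖ :=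
        norm_sub_le_norm_sub_add_norm_sub _ _ _
    _ < r := by linarith

lemma IsHomogeneousFamily.comp_eq_zero_of_mem_coneLocClass {Y : Type*} [TopologicalSpace Y]
    {act : ℝ → Y → Y} {B : Y → H →L[ℂ] H} (hhom : IsHomogeneousFamily U act B)
    (hloc : VertexLocConv π c) (hUiso : ∀ l : ℝ, 0 < l → ∀ v, ‖U l v‖ = ‖v‖)
    (hcomp : DilCompatible π c U) (hBc : Continuous B) (hJ0 : MemAlmostCompact π B)
    (hχ : χ ∈ coneLocClass c) (y : Y) : B y ∘L π χ = 0 := by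
  ext v
  set x : ℝ → H := fun l => U l (π χ v)
  obtain ⟨l', hl', hne, T₀, hT₀, hT⟩ := (hJ0 χ).exists_tendsto_isCompactOperator
    (hBc.clm_comp continuous_const) atTop (act · y)
  have hbound : ∀ᶠ l in atTop, ‖x l‖ ≤ ‖π χ v‖ :=
    (eventually_gt_atTop 0).mono fun l hl => (hUiso l hl _).le
  have hlim : Tendsto (fun l => (B (act l y) ∘L π χ) (x l)) l' (𝓝 0) :=
    tendsto_apply_zero_of_tendsto_isCompactOperator hT₀ hT (hl' hbound)
      fun w => (hcomp.tendsto_inner_apply_atTop hloc hUiso hχ v w).mono_left hl'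
  have hconst : ∀ᶠ l in l', ‖(B (act l y) ∘L π χ) (x l)‖ = ‖B y (π χ v)‖ := by
    refine hl' ?_
    filter_upwards [eventually_gt_atTop 0, hcomp.eventually_apply_eq hχ v] with l hl hfix
    rw [ContinuousLinearMap.comp_apply, hfix, ← hhom l hl y, ← hUiso l⁻¹ (inv_pos.mpr hl)]
    rfl
  have h0 := hlim.norm.congr' hconst
  rw [norm_zero, tendsto_const_nhds_iff] at h0
  simpa using h0

end ConeModule

theorem homogeneous_almost_compact_eq_zero_general
    {K : Type*} [TopologicalSpace K]
    {H : Type*} [NormedAddCommGroup H] [InnerProductSpace ℂ H] [CompleteSpace H]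
    {Y : Type*} [TopologicalSpace Y]
    (c : ConeStruct K) (π : C₀(K, ℂ) →⋆ₙₐ[ℂ] (H →L[ℂ] H))
    (hnd : NondegenerateModule π) (hloc : VertexLocConv π c)
    (U : ℝ → H →L[ℂ] H) (hU : IsUnitaryDilGroup U) (hcomp : DilCompatible π c U)
    (act : ℝ → Y → Y)
    (B : Y → H →L[ℂ] H) (hB : MemLAlg π B)
    (hhom : IsHomogeneousFamily U act B) (hJ0 : MemAlmostCompact π B) :
    ∀ y, B y = 0 := by
  intro y
  obtain ⟨χ₀, hχ₀, -⟩ := hloc 0 1 one_pos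
  have hkill : ∀ χ ∈ coneLocClass c, B y ∘L π χ = 0 := fun χ hχ =>
    hhom.comp_eq_zero_of_mem_coneLocClass hloc hU.2.2.1 hcomp hB.1 hJ0 hχ y
  refine DFunLike.coe_injective <| (B y).continuous.ext_on
    (hnd.dense_iUnion_range_coneLocClass hχ₀) (0 : H →L[ℂ] H).continuous ?_
  rintro _ ⟨_, ⟨χ, rfl⟩, ⟨_, ⟨hχ, rfl⟩, ⟨u, rfl⟩⟩⟩
  exact DFunLike.congr_fun (hkill χ hχ) u

/-- In the cone setting with a parameter space `Y` carrying an
`ℝ₊`-action, a homogeneous element of `L` which is almost compact must vanish: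
`L_∞ ∩ J₀ = {0}`. -/
theorem homogeneous_almost_compact_eq_zero
    {K : Type*} [TopologicalSpace K] [LocallyCompactSpace K] [T2Space K]
    {H : Type*} [NormedAddCommGroup H] [InnerProductSpace ℂ H] [CompleteSpace H]
    {Y : Type*} [TopologicalSpace Y]
    (c : ConeStruct K) (π : C₀(K, ℂ) →⋆ₙₐ[ℂ] (H →L[ℂ] H))
    (hnd : NondegenerateModule π) (hloc : VertexLocConv π c)
    (U : ℝ → H →L[ℂ] H) (hU : IsUnitaryDilGroup U) (hcomp : DilCompatible π c U)
    (act : ℝ → Y → Y) (hact_cont : ∀ l : ℝ, 0 < l → Continuous (act l))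
    (hact_one : act 1 = id)
    (hact_mul : ∀ l m : ℝ, 0 < l → 0 < m → ∀ y, act (l * m) y = act l (act m y))
    (B : Y → H →L[ℂ] H) (hB : MemLAlg π B)
    (hhom : IsHomogeneousFamily U act B) (hJ0 : MemAlmostCompact π B) :
    ∀ y, B y = 0 :=
  homogeneous_almost_compact_eq_zero_general c π hnd hloc U hU hcomp act B hB hhom hJ0
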